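/- Let G be a multigraph with χ'(G) = k+1 ≥ Δ(G)+2 and let e be a k-critical edge of G. Then G−e has a unique maximal k-dense subgraph H containing both endvertices of e, and e is a k-critical edge of H+e. -/

import Mathlib

/-- A finite multigraph: finite vertex and edge types, each edge has an unordered pair of
endvertices, and there are no loops. -/
structure Multigraph where
  V : Type
  E : Type
  [fintypeV : Fintype V]
  [fintypeE : Fintype E]
  ends : E → Sym2 V
  loopless : ∀ e, ¬ (ends e).IsDiag

attribute [instance] Multigraph.fintypeV Multigraph.fintypeE

namespace Multigraph

section Basic

variable (G : Multigraph)

/-- The degree of a vertex: the number of edges incident with it. -/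
noncomputable def degree (v : G.V) : ℕ := {e : G.E | v ∈ G.ends e}.ncard

/-- The maximum degree Δ(G). -/
noncomputable def maxDegree : ℕ := sSup (Set.range G.degree)

/-- The number of edges joining `x` and `y` (the multiplicity e_G(x,y)). -/
noncomputable def mult (x y : G.V) : ℕ := {e : G.E | G.ends e = s(x, y)}.ncard

/-- The maximum multiplicity μ(G). -/
noncomputable def maxMult : ℕ := sSup {m : ℕ | ∃ x y : G.V, G.mult x y = m}

/-- `c` is a proper edge coloring, with palette `{1,…,k}`, of the edges in `D`
(edges sharing an endvertex get distinct colors). -/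
def IsProperColoringOn (k : ℕ) (D : Set G.E) (c : G.E → ℕ) : Prop :=
  (∀ e ∈ D, c e ∈ Set.Icc 1 k) ∧
  ∀ e ∈ D, ∀ f ∈ D, e ≠ f → (∃ v, v ∈ G.ends e ∧ v ∈ G.ends f) → c e ≠ c f

/-- A proper `k`-edge-coloring of all of `G`. -/
def IsProperColoring (k : ℕ) (c : G.E → ℕ) : Prop := G.IsProperColoringOn k Set.univ c

/-- The chromatic index of the subgraph of `G` consisting of the edges in `D`
(vertices are irrelevant for edge colorings). -/
noncomputable def chromIndexOn (D : Set G.E) : ℕ := sInf {k | ∃ c, G.IsProperColoringOn k D c}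

/-- The chromatic index χ'(G). -/
noncomputable def chromIndex : ℕ := G.chromIndexOn Set.univ

/-- The set of colors of the palette `{1,…,k}` missing at `v`, where only the edges in `D`
are regarded as colored. -/
def missingOn (k : ℕ) (D : Set G.E) (c : G.E → ℕ) (v : G.V) : Set ℕ :=
  {i | i ∈ Set.Icc 1 k ∧ ∀ e ∈ D, v ∈ G.ends e → c e ≠ i}

/-- `X` is elementary: missing-color sets of distinct vertices of `X` are disjoint. -/
def IsElementaryOn (k : ℕ) (D : Set G.E) (c : G.E → ℕ) (X : Set G.V) : Prop :=
  ∀ u ∈ X, ∀ v ∈ X, u ≠ v → G.missingOn k D c u ∩ G.missingOn k D c v = ∅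

/-- The boundary ∂_G(X): edges with an endvertex in `X` and an endvertex outside `X`. -/
def boundary (X : Set G.V) : Set G.E :=
  {e | (∃ v ∈ G.ends e, v ∈ X) ∧ (∃ v ∈ G.ends e, v ∉ X)}

/-- `X` is strongly closed (w.r.t. the coloring `c` of the edges in `D`): every color on a
boundary edge of `X` is present at every vertex of `X`, and the colors on the boundary edges
are pairwise distinct. -/
def IsStronglyClosedOn (D : Set G.E) (c : G.E → ℕ) (X : Set G.V) : Prop :=
  (∀ e ∈ G.boundary X ∩ D, ∀ v ∈ X, ∃ f ∈ D, v ∈ G.ends f ∧ c f = c e) ∧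
  ∀ e ∈ G.boundary X ∩ D, ∀ f ∈ G.boundary X ∩ D, e ≠ f → c e ≠ c f

end Basic

/-- A subgraph of `G`: a set of vertices together with a set of edges all of whose
endvertices belong to the vertex set. -/
structure Subgraph (G : Multigraph) where
  verts : Set G.V
  edges : Set G.E
  support : ∀ e ∈ edges, ∀ v, v ∈ G.ends e → v ∈ verts

section Sub

variable (G : Multigraph)

/-- The whole graph, as a subgraph of itself. -/
def top : G.Subgraph := ⟨Set.univ, Set.univ, fun _ _ _ _ => Set.mem_univ _⟩

/-- `H` is a `k`-dense subgraph: it has an odd number of vertices and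
`|E(H)| = (|V(H)|-1)·k/2`. -/
def IsDense (k : ℕ) (H : G.Subgraph) : Prop :=
  Odd H.verts.ncard ∧ 2 * H.edges.ncard = (H.verts.ncard - 1) * k

/-- `H` is a `k`-dense subgraph of `G - F` (the graph obtained by deleting the edges of `F`). -/
def IsDenseIn (F : Set G.E) (k : ℕ) (H : G.Subgraph) : Prop :=
  H.edges ∩ F = ∅ ∧ G.IsDense k H

/-- `H` is a maximal `k`-dense subgraph of `G - F`. -/
def IsMaximalDenseIn (F : Set G.E) (k : ℕ) (H : G.Subgraph) : Prop :=
  G.IsDenseIn F k H ∧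
  ∀ H' : G.Subgraph, G.IsDenseIn F k H' → H.verts ⊆ H'.verts → H.edges ⊆ H'.edges →
    H.verts = H'.verts ∧ H.edges = H'.edges

/-- The density Γ(H) of a subgraph `H` of `G`:
`max { 2|E(H')|/(|V(H')|-1) : H' ⊆ H, |V(H')| ≥ 3 odd }` (and `0` if there is no such `H'`,
since in `ℝ` the supremum of the empty set is `0`). -/
noncomputable def densityOf (H : G.Subgraph) : ℝ :=
  sSup {x : ℝ | ∃ H' : G.Subgraph, H'.verts ⊆ H.verts ∧ H'.edges ⊆ H.edges ∧
    3 ≤ H'.verts.ncard ∧ Odd H'.verts.ncard ∧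
    x = 2 * (H'.edges.ncard : ℝ) / ((H'.verts.ncard : ℝ) - 1)}

/-- The density Γ(G). -/
noncomputable def density : ℝ := G.densityOf G.top

/-- `e` is a `k`-critical edge of `G`: `χ'(G-e) = k < χ'(G) = k+1`. -/
def IsCriticalEdge (k : ℕ) (e : G.E) : Prop :=
  G.chromIndexOn {e}ᶜ = k ∧ G.chromIndex = k + 1

/-- Degree of `v` in the subgraph consisting of the edges in `D`. -/
noncomputable def degreeOn (D : Set G.E) (v : G.V) : ℕ := {e : G.E | e ∈ D ∧ v ∈ G.ends e}.ncard

/-- Maximum degree of the subgraph consisting of the edges in `D`. -/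
noncomputable def maxDegreeOn (D : Set G.E) : ℕ := sSup (Set.range (G.degreeOn D))

/-- Multiplicity of the pair `x,y` in the subgraph consisting of the edges in `D`. -/
noncomputable def multOn (D : Set G.E) (x y : G.V) : ℕ :=
  {e : G.E | e ∈ D ∧ G.ends e = s(x, y)}.ncard

/-- Maximum multiplicity of the subgraph consisting of the edges in `D`. -/
noncomputable def maxMultOn (D : Set G.E) : ℕ := sSup {m : ℕ | ∃ x y : G.V, G.multOn D x y = m}

/-- The simple graph underlying the subgraph of `G` with edge set `D`. -/
def simpleOn (D : Set G.E) : SimpleGraph G.V where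
  Adj a b := a ≠ b ∧ ∃ e ∈ D, G.ends e = s(a, b)
  symm := by
    constructor
    rintro a b ⟨hab, e, he, hh⟩
    exact ⟨hab.symm, e, he, hh.trans Sym2.eq_swap⟩
  loopless := by constructor; rintro a ⟨h, -⟩; exact h rfl

/-- The diameter (in `ℕ∞`) of the subgraph with vertex set `S` and edge set `D`:
the greatest distance between a pair of its vertices. -/
noncomputable def diamOn (S : Set G.V) (D : Set G.E) : ℕ∞ :=
  sSup {d : ℕ∞ | ∃ u ∈ S, ∃ v ∈ S, (G.simpleOn D).edist u v = d}

/-- The distance (in `ℕ∞`) between two edges of `G`: the length of a shortest path connecting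
an endvertex of `e` and an endvertex of `f`. -/
noncomputable def edgeDist (e f : G.E) : ℕ∞ :=
  sInf {d : ℕ∞ | ∃ u v : G.V, u ∈ G.ends e ∧ v ∈ G.ends f ∧
    (G.simpleOn Set.univ).edist u v = d}

/-- A matching: a set of edges no two of which share an endvertex. -/
def IsMatching (M : Set G.E) : Prop :=
  ∀ e ∈ M, ∀ f ∈ M, e ≠ f → ∀ v : G.V, v ∈ G.ends e → v ∉ G.ends f

/-- An edge `e ∈ E_G(x,y)` is fully `G`-saturated if `d_G(x) = d_G(y) = Δ(G)` and
`e_G(x,y) = μ(G)`. -/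
def IsFullySaturated (e : G.E) : Prop :=
  ∃ x y : G.V, G.ends e = s(x, y) ∧ G.degree x = G.maxDegree ∧ G.degree y = G.maxDegree ∧
    G.mult x y = G.maxMult

/-- One step along a Kempe `(α,β)`-chain: an edge of `D` colored `α` or `β` joining the
two vertices. -/
def chainStep (D : Set G.E) (c : G.E → ℕ) (α β : ℕ) (a b : G.V) : Prop :=
  ∃ e ∈ D, G.ends e = s(a, b) ∧ (c e = α ∨ c e = β)

/-- `u` and `v` lie on the same `(α,β)`-chain, i.e. `P_u(α,β) = P_v(α,β)`. -/
def sameChain (D : Set G.E) (c : G.E → ℕ) (α β : ℕ) (u v : G.V) : Prop :=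
  Relation.ReflTransGen (G.chainStep D c α β) u v

end Sub

/-- The Goldberg–Seymour theorem (proved by Chen, Jing and Zang), as a hypothesis:
every multigraph `G'` with `χ'(G') ≥ Δ(G')+2` satisfies `χ'(G') = ⌈Γ(G')⌉`. -/
def GoldbergSeymour : Prop :=
  ∀ G' : Multigraph, G'.maxDegree + 2 ≤ G'.chromIndex → (G'.chromIndex : ℤ) = ⌈G'.density⌉

/-- A (general) multi-fan at `x` with respect to the edge `e₀ ∈ E_G(x,y₀)` and the coloring
`c` of the edges in `D` with palette `{1,…,k}`: a sequence `(x, e₀, y₀, e₁, y₁, …, e_p, y_p)`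
of vertices and pairwise distinct edges with `e_i ∈ E_G(x, y_i)` and, for `i ≥ 1`,
`c(e_i)` missing at `y_j` for some `j < i`. -/
structure MultiFan (G : Multigraph) (k : ℕ) (D : Set G.E) (c : G.E → ℕ)
    (x : G.V) (e₀ : G.E) (y₀ : G.V) where
  p : ℕ
  edge : Fin (p + 1) → G.E
  vx : Fin (p + 1) → G.V
  edge_zero : edge 0 = e₀
  vx_zero : vx 0 = y₀
  ends_eq : ∀ i, G.ends (edge i) = s(x, vx i)
  edge_inj : Function.Injective edge
  fan_cond : ∀ i : Fin (p + 1), i ≠ 0 →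
    ∃ j : Fin (p + 1), j < i ∧ c (edge i) ∈ G.missingOn k D c (vx j)

namespace MultiFan

variable {G : Multigraph} {k : ℕ} {D : Set G.E} {c : G.E → ℕ} {x : G.V} {e₀ : G.E} {y₀ : G.V}

/-- The vertex set `V(F)` of a multi-fan. -/
def verts (F : MultiFan G k D c x e₀ y₀) : Set G.V := insert x (Set.range F.vx)

/-- `F` is a subsequence of `F'`. -/
def Subseq (F F' : MultiFan G k D c x e₀ y₀) : Prop :=
  ∃ ι : Fin (F.p + 1) → Fin (F'.p + 1), StrictMono ι ∧
    ∀ i, F'.edge (ι i) = F.edge i ∧ F'.vx (ι i) = F.vx i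

/-- `F` is a maximal multi-fan: no multi-fan contains it as a proper subsequence. -/
def IsMaximal (F : MultiFan G k D c x e₀ y₀) : Prop :=
  ∀ F' : MultiFan G k D c x e₀ y₀, F.Subseq F' → F'.p = F.p

/-- `F` contains no `i`-edge. -/
def NoColor (F : MultiFan G k D c x e₀ y₀) (i : ℕ) : Prop :=
  ∀ j, F.edge j ∈ D → c (F.edge j) ≠ i

/-- `F` is a multi-fan without `i`-edges that is maximal among such. -/
def IsMaximalWithout (F : MultiFan G k D c x e₀ y₀) (i : ℕ) : Prop :=
  F.NoColor i ∧
  ∀ F' : MultiFan G k D c x e₀ y₀, F'.NoColor i → F.Subseq F' → F'.p = F.p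

/-- `e_F(x,z)`: the number of edges of the multi-fan `F` joining `x` and `z`. -/
noncomputable def multAt (F : MultiFan G k D c x e₀ y₀) (z : G.V) : ℕ :=
  Nat.card {j : Fin (F.p + 1) // F.vx j = z}

end MultiFan

end Multigraph

/-!
Colour `G - e` with `k` colours. Each colour class is a matching, so the edges of a `k`-colourable
graph inside an odd vertex set `S` number at most `k(|S| - 1)/2`. By Goldberg–Seymour some odd
subgraph of `G` exceeds this bound, so it contains `e`, and removing `e` leaves its vertex set
spanning a `k`-dense subgraph of `G - e`. In a `k`-dense subgraph every colour class is a
near-perfect matching; taking a colour missing at an end `x` of `e` (it exists because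
`d(x) ≤ Δ < k`), two `k`-dense subgraphs through `x` meet in an odd vertex set, and
inclusion–exclusion makes the subgraph induced by their union `k`-dense again. Hence maximal
ones through `x` coincide. The same counting bound gives `χ'(H) = k` and `χ'(H + e) = k + 1`.
-/

namespace Multigraph

variable {G : Multigraph}

theorem Subgraph.ext {H K : G.Subgraph} (hV : H.verts = K.verts) (hE : H.edges = K.edges) :
    H = K := by
  cases H; cases K; simp_all

theorem ncard_ends (f : G.E) : {v | v ∈ G.ends f}.ncard = 2 := by
  classical
  rw [← Sym2.card_toFinset_of_not_isDiag _ (G.loopless f), ← Set.ncard_coe_finset]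
  congr 1
  ext v
  simp

theorem one_lt_ncard_of_ends_subset {f : G.E} {S : Set G.V} (hS : ∀ v ∈ G.ends f, v ∈ S) :
    1 < S.ncard :=
  (ncard_ends f).symm.trans_le (Set.ncard_le_ncard hS)

theorem degree_le_maxDegree (v : G.V) : G.degree v ≤ G.maxDegree :=
  le_csSup (Set.finite_range _).bddAbove ⟨v, rfl⟩

theorem degreeOn_compl_singleton_lt {e : G.E} {v : G.V} (hv : v ∈ G.ends e) :
    G.degreeOn {e}ᶜ v < G.degree v :=
  Set.ncard_lt_ncard ⟨fun _ hf => hf.2, fun h => (h hv).1 rfl⟩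

theorem missingOn_nonempty_of_degreeOn_lt {k : ℕ} {D : Set G.E} (c : G.E → ℕ) {v : G.V}
    (h : G.degreeOn D v < k) : (G.missingOn k D c v).Nonempty := by
  by_contra! hempty
  have hcover : Set.Icc 1 k ⊆ c '' {f | f ∈ D ∧ v ∈ G.ends f} := by
    intro i hi
    by_contra hi'
    exact (Set.eq_empty_iff_forall_notMem.1 hempty) i
      ⟨hi, fun f hf hvf hfi => hi' ⟨f, ⟨hf, hvf⟩, hfi⟩⟩
  have := (Set.ncard_le_ncard hcover).trans (Set.ncard_image_le (Set.toFinite _))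
  rw [← Finset.coe_Icc, Set.ncard_coe_finset, Nat.card_Icc, Nat.add_sub_cancel] at this
  exact (this.trans_lt h).false

theorem IsMatching.ncard_cover {M : Set G.E} (hM : G.IsMatching M) :
    {v | ∃ f ∈ M, v ∈ G.ends f}.ncard = 2 * M.ncard := by
  have hcover : {v | ∃ f ∈ M, v ∈ G.ends f} = ⋃ f ∈ M, {v | v ∈ G.ends f} := by
    ext v; simp
  have hdisj : M.PairwiseDisjoint fun f => {v | v ∈ G.ends f} :=
    fun f hf g hg hfg => Set.disjoint_left.2 fun v hvf hvg => hM f hf g hg hfg v hvf hvg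
  rw [hcover, (Set.toFinite M).ncard_biUnion (fun _ _ => Set.toFinite _) hdisj,
    finsum_mem_congr rfl fun f _ => ncard_ends f, ← finsum_one,
    mul_finsum_mem' _ _ (Set.toFinite M), mul_one]

theorem IsMatching.two_mul_ncard_le {M : Set G.E} (hM : G.IsMatching M) {S : Set G.V}
    (hMS : ∀ f ∈ M, ∀ v ∈ G.ends f, v ∈ S) (hS : Odd S.ncard) :
    2 * M.ncard ≤ S.ncard - 1 := by
  have hle : {v | ∃ f ∈ M, v ∈ G.ends f}.ncard ≤ S.ncard :=
    Set.ncard_le_ncard (fun v ⟨f, hf, hv⟩ => hMS f hf v hv)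
  rw [hM.ncard_cover] at hle
  obtain ⟨m, hm⟩ := hS
  omega

section Coloring

variable {k : ℕ} {D : Set G.E} {c : G.E → ℕ}

theorem IsProperColoringOn.mono {D' : Set G.E} (hc : G.IsProperColoringOn k D c)
    (hD' : D' ⊆ D) : G.IsProperColoringOn k D' c :=
  ⟨fun f hf => hc.1 f (hD' hf), fun f hf g hg => hc.2 f (hD' hf) g (hD' hg)⟩

theorem IsProperColoringOn.isMatching (hc : G.IsProperColoringOn k D c) {F : Set G.E}
    (hFD : F ⊆ D) {i : ℕ} (hFi : ∀ f ∈ F, c f = i) : G.IsMatching F :=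
  fun f hf g hg hfg v hvf hvg =>
    hc.2 f (hFD hf) g (hFD hg) hfg ⟨v, hvf, hvg⟩ ((hFi f hf).trans (hFi g hg).symm)

theorem IsProperColoringOn.ncard_eq_sum_colorClass (hc : G.IsProperColoringOn k D c)
    {F : Set G.E} (hFD : F ⊆ D) :
    F.ncard = ∑ i ∈ Finset.Icc 1 k, {f ∈ F | c f = i}.ncard := by
  have hF : F = ⋃ i ∈ (Finset.Icc 1 k : Set ℕ), {f ∈ F | c f = i} := by
    ext f
    simp only [Finset.coe_Icc, Set.mem_iUnion, Set.mem_ofPred_eq, exists_prop]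
    exact ⟨fun hf => ⟨c f, hc.1 f (hFD hf), hf, rfl⟩, fun ⟨_, _, hf, _⟩ => hf⟩
  have hdisj : (Finset.Icc 1 k : Set ℕ).PairwiseDisjoint fun i => {f ∈ F | c f = i} :=
    fun i _ j _ hij => Set.disjoint_left.2 fun f hfi hfj => hij (hfi.2.symm.trans hfj.2)
  conv_lhs => rw [hF]
  rw [(Finset.finite_toSet _).ncard_biUnion (fun _ _ => Set.toFinite _) hdisj,
    finsum_mem_coe_finset]

theorem IsProperColoringOn.two_mul_ncard_le (hc : G.IsProperColoringOn k D c)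
    {F : Set G.E} (hFD : F ⊆ D) {S : Set G.V} (hFS : ∀ f ∈ F, ∀ v ∈ G.ends f, v ∈ S)
    (hS : Odd S.ncard) : 2 * F.ncard ≤ (S.ncard - 1) * k := by
  rw [hc.ncard_eq_sum_colorClass hFD, Finset.mul_sum]
  calc ∑ i ∈ Finset.Icc 1 k, 2 * {f ∈ F | c f = i}.ncard
      ≤ ∑ _i ∈ Finset.Icc 1 k, (S.ncard - 1) :=
        Finset.sum_le_sum fun i _ =>
          (hc.isMatching (fun f hf => hFD hf.1) fun f hf => hf.2).two_mul_ncard_le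
            (fun f hf => hFS f hf.1) hS
    _ = (S.ncard - 1) * k := by simp [mul_comm]

theorem IsProperColoringOn.two_mul_ncard_colorClass (hc : G.IsProperColoringOn k D c)
    {H : G.Subgraph} (hHD : H.edges ⊆ D) (hH : G.IsDense k H) {i : ℕ}
    (hi : i ∈ Finset.Icc 1 k) : 2 * {f ∈ H.edges | c f = i}.ncard = H.verts.ncard - 1 := by
  have hle : ∀ j ∈ Finset.Icc 1 k, 2 * {f ∈ H.edges | c f = j}.ncard ≤ H.verts.ncard - 1 :=
    fun j _ => (hc.isMatching (fun f hf => hHD hf.1) fun f hf => hf.2).two_mul_ncard_le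
      (fun f hf => H.support f hf.1) hH.1
  have hsum : ∑ j ∈ Finset.Icc 1 k, 2 * {f ∈ H.edges | c f = j}.ncard =
      ∑ _j ∈ Finset.Icc 1 k, (H.verts.ncard - 1) := by
    rw [← Finset.mul_sum, ← hc.ncard_eq_sum_colorClass hHD, hH.2]
    simp [mul_comm]
  exact (Finset.sum_eq_sum_iff_of_le hle).1 hsum i hi

theorem IsProperColoringOn.eq_of_notMem_ends_of_isDense (hc : G.IsProperColoringOn k D c)
    {H : G.Subgraph} (hHD : H.edges ⊆ D) (hH : G.IsDense k H) {i : ℕ}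
    (hi : i ∈ Finset.Icc 1 k) {u w : G.V} (hu : u ∈ H.verts) (hw : w ∈ H.verts)
    (hu' : ∀ f ∈ H.edges, c f = i → u ∉ G.ends f)
    (hw' : ∀ f ∈ H.edges, c f = i → w ∉ G.ends f) : u = w := by
  set C := {v | ∃ f ∈ {f ∈ H.edges | c f = i}, v ∈ G.ends f}
  have hCH : C ⊆ H.verts := fun v ⟨f, hf, hv⟩ => H.support f hf.1 v hv
  have hC : C.ncard = H.verts.ncard - 1 := by
    rw [(hc.isMatching (fun f hf => hHD hf.1) fun f hf => hf.2).ncard_cover,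
      hc.two_mul_ncard_colorClass hHD hH hi]
  have hdiff : (H.verts \ C).ncard ≤ 1 := by
    rw [Set.ncard_sdiff hCH, hC]
    omega
  have huncovered : ∀ v, (∀ f ∈ H.edges, c f = i → v ∉ G.ends f) → v ∉ C :=
    fun v hv ⟨f, hf, hvf⟩ => hv f hf.1 hf.2 hvf
  exact (Set.ncard_le_one_iff).1 hdiff ⟨hu, huncovered u hu'⟩ ⟨hw, huncovered w hw'⟩

/-- Each vertex of `V(H₁) ∩ V(H₂)` other than `x` is met in both `H₁` and `H₂` by an edge of the
colour missing at `x`, and these two edges coincide: the intersection is `x` plus the vertices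
of a matching. -/
theorem IsProperColoringOn.odd_ncard_inter (hc : G.IsProperColoringOn k D c)
    {H₁ H₂ : G.Subgraph} (h₁D : H₁.edges ⊆ D) (h₂D : H₂.edges ⊆ D)
    (h₁ : G.IsDense k H₁) (h₂ : G.IsDense k H₂) {x : G.V} (hx₁ : x ∈ H₁.verts)
    (hx₂ : x ∈ H₂.verts) {i : ℕ} (hi : i ∈ G.missingOn k D c x) :
    Odd (H₁.verts ∩ H₂.verts).ncard := by
  have hiIcc : i ∈ Finset.Icc 1 k := Finset.mem_Icc.2 hi.1
  have hx : ∀ H : G.Subgraph, H.edges ⊆ D → ∀ f ∈ H.edges, c f = i → x ∉ G.ends f :=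
    fun H hHD f hf hfi hxf => hi.2 f (hHD hf) hxf hfi
  have hmatched : ∀ H : G.Subgraph, H.edges ⊆ D → G.IsDense k H → x ∈ H.verts →
      ∀ v ∈ H.verts, v ≠ x → ∃ f ∈ H.edges, c f = i ∧ v ∈ G.ends f := by
    intro H hHD hH hxH v hv hvx
    by_contra! hv'
    exact hvx (hc.eq_of_notMem_ends_of_isDense hHD hH hiIcc hv hxH hv' (hx H hHD))
  set M := {f ∈ H₁.edges ∩ H₂.edges | c f = i}
  have hinter : H₁.verts ∩ H₂.verts = insert x {v | ∃ f ∈ M, v ∈ G.ends f} := by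
    ext v
    constructor
    · rintro ⟨hv₁, hv₂⟩
      rcases eq_or_ne v x with rfl | hvx
      · exact Set.mem_insert _ _
      obtain ⟨f₁, hf₁, hf₁i, hvf₁⟩ := hmatched H₁ h₁D h₁ hx₁ v hv₁ hvx
      obtain ⟨f₂, hf₂, hf₂i, hvf₂⟩ := hmatched H₂ h₂D h₂ hx₂ v hv₂ hvx
      have hf : f₁ = f₂ := by
        by_contra hne
        exact hc.2 f₁ (h₁D hf₁) f₂ (h₂D hf₂) hne ⟨v, hvf₁, hvf₂⟩ (hf₁i.trans hf₂i.symm)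
      exact Or.inr ⟨f₁, ⟨⟨hf₁, hf ▸ hf₂⟩, hf₁i⟩, hvf₁⟩
    · rintro (rfl | ⟨f, ⟨⟨hf₁, hf₂⟩, -⟩, hvf⟩)
      · exact ⟨hx₁, hx₂⟩
      · exact ⟨H₁.support f hf₁ v hvf, H₂.support f hf₂ v hvf⟩
  have hxM : x ∉ {v | ∃ f ∈ M, v ∈ G.ends f} :=
    fun ⟨f, hf, hxf⟩ => hx H₁ h₁D f hf.1.1 hf.2 hxf
  rw [hinter, Set.ncard_insert_of_notMem hxM,
    (hc.isMatching (fun f hf => h₁D hf.1.1) fun f hf => hf.2).ncard_cover]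
  exact odd_two_mul_add_one _

end Coloring

theorem exists_isProperColoringOn_chromIndexOn (D : Set G.E) :
    ∃ c, G.IsProperColoringOn (G.chromIndexOn D) D c := by
  have hne : {k | ∃ c, G.IsProperColoringOn k D c}.Nonempty :=
    ⟨Fintype.card G.E, fun f => Fintype.equivFin G.E f + 1,
      fun f _ => ⟨Nat.le_add_left 1 _, (Fintype.equivFin G.E f).isLt⟩,
      fun f _ g _ hfg _ hc => hfg (by simpa [Fin.val_inj] using hc)⟩
  exact Nat.sInf_mem hne

theorem chromIndexOn_le {k : ℕ} {D : Set G.E} {c : G.E → ℕ}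
    (hc : G.IsProperColoringOn k D c) : G.chromIndexOn D ≤ k :=
  Nat.sInf_le ⟨c, hc⟩

theorem chromIndexOn_mono {D D' : Set G.E} (h : D' ⊆ D) :
    G.chromIndexOn D' ≤ G.chromIndexOn D := by
  obtain ⟨_, hc⟩ := G.exists_isProperColoringOn_chromIndexOn D
  exact chromIndexOn_le (hc.mono h)

theorem two_mul_ncard_le_mul_chromIndexOn {D : Set G.E} {S : Set G.V}
    (hDS : ∀ f ∈ D, ∀ v ∈ G.ends f, v ∈ S) (hS : Odd S.ncard) :
    2 * D.ncard ≤ (S.ncard - 1) * G.chromIndexOn D := by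
  obtain ⟨_, hc⟩ := G.exists_isProperColoringOn_chromIndexOn D
  exact hc.two_mul_ncard_le subset_rfl hDS hS

def induce (G : Multigraph) (D : Set G.E) (S : Set G.V) : G.Subgraph :=
  ⟨S, {f | f ∈ D ∧ ∀ v ∈ G.ends f, v ∈ S}, fun _ hf => hf.2⟩

section Dense

variable {k : ℕ} {F : Set G.E} {H H₁ H₂ : G.Subgraph}

theorem IsDense.le_chromIndexOn (hH : G.IsDense k H) (h1 : 1 < H.verts.ncard) :
    k ≤ G.chromIndexOn H.edges := by
  have := two_mul_ncard_le_mul_chromIndexOn H.support hH.1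
  rw [hH.2] at this
  exact Nat.le_of_mul_le_mul_left this (by omega)

theorem IsDense.lt_chromIndexOn_insert (hH : G.IsDense k H) {e : G.E} (he : e ∉ H.edges)
    (hends : ∀ v ∈ G.ends e, v ∈ H.verts) : k < G.chromIndexOn (insert e H.edges) := by
  have := two_mul_ncard_le_mul_chromIndexOn (D := insert e H.edges)
    (Set.forall_mem_insert.2 ⟨hends, H.support⟩) hH.1
  rw [Set.ncard_insert_of_notMem he, mul_add, hH.2] at this
  exact Nat.lt_of_mul_lt_mul_left (a := H.verts.ncard - 1) (by omega)

theorem exists_subgraph_of_lt_density (h : (k : ℝ) < G.density) :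
    ∃ H : G.Subgraph, Odd H.verts.ncard ∧ (H.verts.ncard - 1) * k < 2 * H.edges.ncard := by
  by_contra! hle
  refine h.not_ge (Real.sSup_le ?_ k.cast_nonneg)
  rintro _ ⟨H, -, -, h3, hodd, rfl⟩
  have hn : (1 : ℝ) < H.verts.ncard := by exact_mod_cast (by omega : 1 < H.verts.ncard)
  rw [div_le_iff₀ (by linarith)]
  have hcast : (2 * H.edges.ncard : ℝ) ≤ ((H.verts.ncard - 1 : ℕ) : ℝ) * k := by
    exact_mod_cast hle H hodd
  rw [Nat.cast_sub (by omega)] at hcast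
  push_cast at hcast
  linarith

theorem IsDenseIn.edges_subset_compl (h : G.IsDenseIn F k H) : H.edges ⊆ Fᶜ :=
  fun f hf hfF => (Set.eq_empty_iff_forall_notMem.1 h.1) f ⟨hf, hfF⟩

theorem IsProperColoringOn.isDenseIn_induce_of_lt {e : G.E} {c : G.E → ℕ}
    (hc : G.IsProperColoringOn k {e}ᶜ c) (hodd : Odd H.verts.ncard)
    (hlt : (H.verts.ncard - 1) * k < 2 * H.edges.ncard) :
    e ∈ H.edges ∧ G.IsDenseIn {e} k (G.induce {e}ᶜ H.verts) := by
  have hle : 2 * (G.induce {e}ᶜ H.verts).edges.ncard ≤ (H.verts.ncard - 1) * k :=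
    hc.two_mul_ncard_le (fun _ hf => hf.1) (fun _ hf => hf.2) hodd
  have hsub : H.edges \ {e} ⊆ (G.induce {e}ᶜ H.verts).edges :=
    fun f hf => ⟨hf.2, H.support f hf.1⟩
  have heH : e ∈ H.edges := by
    by_contra heH
    rw [Set.sdiff_singleton_eq_self heH] at hsub
    have := Set.ncard_le_ncard hsub
    omega
  have hge := Set.ncard_le_ncard hsub
  rw [Set.ncard_sdiff_singleton_of_mem heH] at hge
  obtain ⟨m, hm⟩ := hodd
  -- `(|V(H)| - 1) k` is even, so `2 |E(H)|` exceeds it by at least two.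
  have heven : (H.verts.ncard - 1) * k = 2 * (m * k) := by rw [hm, Nat.add_sub_cancel, mul_assoc]
  refine ⟨heH, Set.eq_empty_iff_forall_notMem.2 fun f hf => hf.1.1 hf.2, ⟨m, hm⟩, ?_⟩
  change 2 * (G.induce {e}ᶜ H.verts).edges.ncard = (H.verts.ncard - 1) * k
  omega

theorem isDenseIn_induce_union {c : G.E → ℕ} (hc : G.IsProperColoringOn k Fᶜ c)
    (h₁ : G.IsDenseIn F k H₁) (h₂ : G.IsDenseIn F k H₂)
    (hodd : Odd (H₁.verts ∩ H₂.verts).ncard) :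
    G.IsDenseIn F k (G.induce Fᶜ (H₁.verts ∪ H₂.verts)) := by
  set U := G.induce Fᶜ (H₁.verts ∪ H₂.verts)
  have hverts := Set.ncard_union_add_ncard_inter H₁.verts H₂.verts
  have hedges := Set.ncard_union_add_ncard_inter H₁.edges H₂.edges
  obtain ⟨⟨m₁, hm₁⟩, hE₁⟩ := h₁.2
  obtain ⟨⟨m₂, hm₂⟩, hE₂⟩ := h₂.2
  obtain ⟨t, ht⟩ := hodd
  have hUverts : U.verts.ncard = 2 * (m₁ + m₂ - t) + 1 := by
    change (H₁.verts ∪ H₂.verts).ncard = _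
    omega
  have hUle : 2 * U.edges.ncard ≤ (U.verts.ncard - 1) * k :=
    hc.two_mul_ncard_le (fun _ hf => hf.1) (fun _ hf => hf.2) ⟨_, hUverts⟩
  have hunion : H₁.edges ∪ H₂.edges ⊆ U.edges := by
    rintro f (hf | hf)
    · exact ⟨h₁.edges_subset_compl hf, fun v hv => Or.inl (H₁.support f hf v hv)⟩
    · exact ⟨h₂.edges_subset_compl hf, fun v hv => Or.inr (H₂.support f hf v hv)⟩
  have hinter : 2 * (H₁.edges ∩ H₂.edges).ncard ≤ ((H₁.verts ∩ H₂.verts).ncard - 1) * k :=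
    hc.two_mul_ncard_le (fun f hf => h₁.edges_subset_compl hf.1)
      (fun f hf v hv => ⟨H₁.support f hf.1 v hv, H₂.support f hf.2 v hv⟩) ⟨t, ht⟩
  have hlin : (U.verts.ncard - 1) * k + ((H₁.verts ∩ H₂.verts).ncard - 1) * k =
      (H₁.verts.ncard - 1) * k + (H₂.verts.ncard - 1) * k := by
    rw [← add_mul, ← add_mul]
    congr 1
    omega
  have hUge := Set.ncard_le_ncard hunion
  refine ⟨Set.eq_empty_iff_forall_notMem.2 fun f hf => hf.1.1 hf.2, ⟨_, hUverts⟩, ?_⟩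
  omega

theorem IsMaximalDenseIn.eq_of_missingOn {c : G.E → ℕ} (hc : G.IsProperColoringOn k Fᶜ c)
    (h₁ : G.IsMaximalDenseIn F k H₁) (h₂ : G.IsMaximalDenseIn F k H₂) {x : G.V}
    (hx₁ : x ∈ H₁.verts) (hx₂ : x ∈ H₂.verts) {i : ℕ} (hi : i ∈ G.missingOn k Fᶜ c x) :
    H₁ = H₂ := by
  have hU := isDenseIn_induce_union hc h₁.1 h₂.1 <| hc.odd_ncard_inter
    h₁.1.edges_subset_compl h₂.1.edges_subset_compl h₁.1.2 h₂.1.2 hx₁ hx₂ hi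
  have hsub : ∀ H : G.Subgraph, G.IsDenseIn F k H → H.verts ⊆ H₁.verts ∪ H₂.verts →
      H.edges ⊆ (G.induce Fᶜ (H₁.verts ∪ H₂.verts)).edges :=
    fun H hH hV f hf => ⟨hH.edges_subset_compl hf, fun v hv => hV (H.support f hf v hv)⟩
  obtain ⟨hV₁, hE₁⟩ := h₁.2 _ hU Set.subset_union_left (hsub H₁ h₁.1 Set.subset_union_left)
  obtain ⟨hV₂, hE₂⟩ := h₂.2 _ hU Set.subset_union_right (hsub H₂ h₂.1 Set.subset_union_right)
  exact Subgraph.ext (hV₁.trans hV₂.symm) (hE₁.trans hE₂.symm)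

theorem IsDenseIn.exists_isMaximalDenseIn (h : G.IsDenseIn F k H) :
    ∃ H', G.IsMaximalDenseIn F k H' ∧ H.verts ⊆ H'.verts := by
  obtain ⟨S, hHS, hS⟩ := Finite.exists_le_maximal
    (p := fun S : Set G.V => ∃ H', G.IsDenseIn F k H' ∧ H'.verts = S) ⟨H, h, rfl⟩
  obtain ⟨H', hH', rfl⟩ := hS.prop
  refine ⟨H', ⟨hH', fun H'' hH'' hV hE => ?_⟩, hHS⟩
  have hV' : H'.verts = H''.verts := hS.eq_of_le ⟨H'', hH'', rfl⟩ hV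
  have hcard : H''.edges.ncard ≤ H'.edges.ncard := by
    have := hH'.2.2
    rw [hV', ← hH''.2.2] at this
    omega
  exact ⟨hV', Set.eq_of_subset_of_ncard_le hE hcard⟩

end Dense

end Multigraph

theorem unique_maximal_dense_subgraph_general (hGS : Multigraph.GoldbergSeymour)
    (G : Multigraph) (k : ℕ)
    (hΔ : G.maxDegree + 2 ≤ k + 1)
    (e : G.E) (he : G.IsCriticalEdge k e) :
    ∃ H : G.Subgraph,
      (G.IsMaximalDenseIn {e} k H ∧ (∀ v, v ∈ G.ends e → v ∈ H.verts) ∧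
        G.chromIndexOn H.edges = k ∧ G.chromIndexOn (insert e H.edges) = k + 1) ∧
      ∀ H' : G.Subgraph, G.IsMaximalDenseIn {e} k H' → (∀ v, v ∈ G.ends e → v ∈ H'.verts) →
        H' = H := by
  open Multigraph in
  obtain ⟨c, hc⟩ : ∃ c, G.IsProperColoringOn k {e}ᶜ c :=
    he.1 ▸ G.exists_isProperColoringOn_chromIndexOn {e}ᶜ
  have hdensity : (k : ℝ) < G.density := by
    have hceil := hGS G (he.2 ▸ hΔ)
    rw [he.2] at hceil
    exact Int.lt_ceil.1 (by omega)
  obtain ⟨H₀, hodd, hlt⟩ := exists_subgraph_of_lt_density hdensity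
  obtain ⟨heH₀, hdense⟩ := hc.isDenseIn_induce_of_lt hodd hlt
  obtain ⟨H, hH, hH₀H⟩ := hdense.exists_isMaximalDenseIn
  have hends : ∀ v ∈ G.ends e, v ∈ H.verts := fun v hv => hH₀H (H₀.support e heH₀ v hv)
  obtain ⟨x, hx⟩ : ∃ x, x ∈ G.ends e := ⟨_, Sym2.out_fst_mem _⟩
  obtain ⟨i, hi⟩ := missingOn_nonempty_of_degreeOn_lt (k := k) c <|
    (degreeOn_compl_singleton_lt hx).trans_le <| by have := G.degree_le_maxDegree x; omega
  have heH : e ∉ H.edges := fun h => hH.1.edges_subset_compl h rfl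
  refine ⟨H, ⟨hH, hends, ?_, ?_⟩, fun H' hH' hends' =>
    hH'.eq_of_missingOn hc hH (hends' x hx) (hends x hx) hi⟩
  · exact le_antisymm ((chromIndexOn_mono hH.1.edges_subset_compl).trans he.1.le)
      (hH.1.2.le_chromIndexOn (one_lt_ncard_of_ends_subset hends))
  · exact le_antisymm ((chromIndexOn_mono (Set.subset_univ _)).trans he.2.le)
      (hH.1.2.lt_chromIndexOn_insert heH hends)

/-- **Lemma 2.4(a).** (Assuming the Goldberg–Seymour theorem.) If `χ'(G) = k+1 ≥ Δ(G)+2` and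
`e` is a `k`-critical edge of `G`, then `G-e` has a unique maximal `k`-dense subgraph `H`
containing both endvertices of `e`, and `e` is also a `k`-critical edge of `H+e`. -/
theorem unique_maximal_dense_subgraph (hGS : Multigraph.GoldbergSeymour)
    (G : Multigraph) (k : ℕ)
    (hχ : G.chromIndex = k + 1) (hΔ : G.maxDegree + 2 ≤ k + 1)
    (e : G.E) (he : G.IsCriticalEdge k e) :
    ∃ H : G.Subgraph,
      (G.IsMaximalDenseIn {e} k H ∧ (∀ v, v ∈ G.ends e → v ∈ H.verts) ∧
        G.chromIndexOn H.edges = k ∧ G.chromIndexOn (insert e H.edges) = k + 1) ∧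
      ∀ H' : G.Subgraph, G.IsMaximalDenseIn {e} k H' → (∀ v, v ∈ G.ends e → v ∈ H'.verts) →
        H' = H :=
  unique_maximal_dense_subgraph_general hGS G k hΔ e he
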